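/- arXiv:1711.10917 — 4 statements merged into one kernel-verified Lean document; each statement's English description precedes it below -/
import Mathlib

section
/- Let α > 0 and let φ be the cardinal hyperbolic GB-splines with phase α. Define, for p ≥ 1, h_p^{H_α}(θ) := φ p ((p+1)/2) + 2·Σ_{k=1}^{⌊p/2⌋} φ p ((p+1)/2 − k)·cos(kθ), and, for p ≥ 2, f_p^{H_α}(θ) := −φ̈ p ((p+1)/2) − 2·Σ_{k=1}^{⌊p/2⌋} φ̈ p ((p+1)/2 − k)·cos(kθ), where φ̈ p is the second derivative of t ↦ φ p t. Then for every integer p ≥ 3 and every θ ∈ [−π, π]: f_p^{H_α}(θ) = (2 − 2·cos θ) · h_{p−2}^{H_α}(θ). -/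
open Real MeasureTheory

noncomputable def hSym (φ : ℕ → ℝ → ℝ) (p : ℕ) (θ : ℝ) : ℝ :=
  φ p (((p : ℝ) + 1) / 2) +
    2 * ∑ k ∈ Finset.Icc 1 (p / 2), φ p (((p : ℝ) + 1) / 2 - (k : ℝ)) * Real.cos ((k : ℝ) * θ)

noncomputable def fSym (φ : ℕ → ℝ → ℝ) (p : ℕ) (θ : ℝ) : ℝ :=
  -(deriv (deriv (φ p)) (((p : ℝ) + 1) / 2)) -
    2 * ∑ k ∈ Finset.Icc 1 (p / 2),
      deriv (deriv (φ p)) (((p : ℝ) + 1) / 2 - (k : ℝ)) * Real.cos ((k : ℝ) * θ)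

/-!
Differentiating the recursion twice gives
`φ'' (p + 2) t = φ p t - 2 φ p (t - 1) + φ p (t - 2)`, so the coefficients of `fSym φ (p + 2)`
are minus the second differences of the samples `b j = φ p ((p + 1) / 2 - j)`, `j ∈ ℤ`.
Each spline is symmetric about the centre of its support and vanishes on `t ≤ 0`, so `b` is even
and vanishes beyond `p / 2`. Summation by parts against `cos (k θ)`, with
`cos ((k + 1) θ) + cos ((k - 1) θ) = 2 cos θ cos (k θ)`, then turns the second difference into
the factor `2 - 2 cos θ`.
-/

theorem sum_Icc_secondDiff_mul_cos (b : ℤ → ℝ) (θ : ℝ) (n : ℕ) :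
    ∑ k ∈ Finset.Icc 1 n, (b (k - 1) - 2 * b k + b (k + 1)) * cos (k * θ) =
      (b (n + 1) * cos (n * θ) - b n * cos ((n + 1) * θ)) - (b 1 - b 0 * cos θ)
        - (2 - 2 * cos θ) * ∑ k ∈ Finset.Icc 1 n, b k * cos (k * θ) := by
  induction n with
  | zero => simp
  | succ n ih =>
    have hcos : cos ((n + 1 + 1) * θ) + cos (n * θ) = 2 * cos ((n + 1) * θ) * cos θ := by
      rw [cos_add_cos]; ring_nf
    rw [Finset.sum_Icc_succ_top (by omega), Finset.sum_Icc_succ_top (by omega), ih]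
    push_cast
    rw [add_sub_cancel_right]
    linear_combination b (n + 1) * hcos

theorem neg_secondDiff_cosSum (b : ℤ → ℝ) (θ : ℝ) (m : ℕ) (hb : b (-1) = b 1)
    (hm₁ : b (m + 1) = 0) (hm₂ : b (m + 2) = 0) :
    -(b (-1) - 2 * b 0 + b 1)
        - 2 * ∑ k ∈ Finset.Icc 1 (m + 1), (b (k - 1) - 2 * b k + b (k + 1)) * cos (k * θ) =
      (2 - 2 * cos θ) * (b 0 + 2 * ∑ k ∈ Finset.Icc 1 m, b k * cos (k * θ)) := by
  rw [sum_Icc_secondDiff_mul_cos, Finset.sum_Icc_succ_top (by omega)]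
  push_cast
  rw [add_assoc, one_add_one_eq_two, hm₁, hm₂, hb]
  ring

section Recursion

variable {φ : ℕ → ℝ → ℝ}
  (hrec : ∀ q : ℕ, 2 ≤ q → ∀ t : ℝ, φ q t = ∫ s in (0:ℝ)..t, (φ (q - 1) s - φ (q - 1) (s - 1)))
include hrec

theorem hasDerivAt_of_integral_rec {q : ℕ} (hq : Continuous (φ (q + 1))) (t : ℝ) :
    HasDerivAt (φ (q + 2)) (φ (q + 1) t - φ (q + 1) (t - 1)) t := by
  rw [funext (hrec (q + 2) le_add_self)]
  exact ((hq.sub (hq.comp (continuous_sub_right 1))).integral_hasStrictDerivAt 0 t).hasDerivAt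

theorem continuous_of_integral_rec (h1 : Continuous (φ 1)) (q : ℕ) : Continuous (φ (q + 1)) := by
  induction q with
  | zero => exact h1
  | succ q ih =>
    exact continuous_iff_continuousAt.2 fun t => (hasDerivAt_of_integral_rec hrec ih t).continuousAt

theorem eq_zero_of_nonpos_of_integral_rec (h1 : ∀ t ≤ 0, φ 1 t = 0) (q : ℕ) :
    ∀ t ≤ 0, φ (q + 1) t = 0 := by
  induction q with
  | zero => exact h1
  | succ q ih =>
    intro t ht
    rw [hrec (q + 2) le_add_self, intervalIntegral.integral_congr (g := fun _ => 0),
      intervalIntegral.integral_zero]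
    intro s hs
    rw [Set.uIcc_of_ge ht] at hs
    simp [ih s hs.2, ih (s - 1) (by linarith [hs.2])]

theorem symm_of_integral_rec (h1c : Continuous (φ 1)) (h1 : ∀ t, φ 1 (2 - t) = φ 1 t) (q : ℕ) :
    ∀ t, φ (q + 1) (q + 2 - t) = φ (q + 1) t := by
  induction q with
  | zero => simpa using h1
  | succ q ih =>
    have hg := continuous_of_integral_rec hrec h1c q
    set F : ℝ → ℝ := fun t => φ (q + 2) (q + 3 - t) - φ (q + 2) t
    have hF : ∀ t, HasDerivAt F 0 t := by
      intro t
      have e1 := ih (t - 1)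
      rw [show (q : ℝ) + 2 - (t - 1) = q + 3 - t by ring] at e1
      have e2 := ih t
      refine (((hasDerivAt_of_integral_rec hrec hg (q + 3 - t)).comp_const_sub _ t).sub
        (hasDerivAt_of_integral_rec hrec hg t)).congr_deriv ?_
      rw [show (q : ℝ) + 3 - t - 1 = q + 2 - t by ring, e1, e2]
      ring
    have hc := is_const_of_deriv_eq_zero (fun t => (hF t).differentiableAt) (fun t => (hF t).deriv)
    intro t
    have := hc t ((q + 3) / 2)
    simp only [F, show (q : ℝ) + 3 - (q + 3) / 2 = (q + 3) / 2 by ring, sub_self] at this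
    rw [Nat.cast_succ, show (q : ℝ) + 1 + 2 = q + 3 by ring]
    exact sub_eq_zero.1 this

theorem deriv_deriv_of_integral_rec (h1c : Continuous (φ 1)) (q : ℕ) (t : ℝ) :
    deriv (deriv (φ (q + 3))) t = φ (q + 1) t - 2 * φ (q + 1) (t - 1) + φ (q + 1) (t - 2) := by
  have hg := continuous_of_integral_rec hrec h1c q
  have hd : deriv (φ (q + 3)) = fun u => φ (q + 2) u - φ (q + 2) (u - 1) := funext fun u =>
    (hasDerivAt_of_integral_rec hrec (continuous_of_integral_rec hrec h1c (q + 1)) u).deriv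
  rw [hd, ((hasDerivAt_of_integral_rec hrec hg t).fun_sub
      ((hasDerivAt_of_integral_rec hrec hg (t - 1)).comp_sub_const t 1)).deriv]
  rw [sub_sub t, one_add_one_eq_two]
  ring

end Recursion

section HyperbolicKernel

variable {α : ℝ} {φ : ℕ → ℝ → ℝ}
  (hφ1 : ∀ t : ℝ, φ 1 t =
      if 0 ≤ t ∧ t < 1 then α / (2 * (Real.cosh α - 1)) * Real.sinh (α * t)
      else if 1 ≤ t ∧ t < 2 then α / (2 * (Real.cosh α - 1)) * Real.sinh (α * (2 - t))
      else 0)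
include hφ1

theorem hyperbolic_kernel_eq :
    φ 1 = fun t => α / (2 * (cosh α - 1)) * sinh (α * max 0 (1 - |t - 1|)) := by
  funext t
  rw [hφ1]
  split_ifs with h₀ h₁
  · rw [abs_of_neg (by linarith [h₀.2]), max_eq_right (by linarith [h₀.1])]
    ring_nf
  · rw [abs_of_nonneg (by linarith [h₁.1]), max_eq_right (by linarith [h₁.2])]
    ring_nf
  · have hout : 1 - |t - 1| ≤ 0 := by
      rw [sub_nonpos, le_abs]
      by_contra! h
      rcases lt_or_ge t 1 with ht | ht
      · exact h₀ ⟨by linarith [h.2], ht⟩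
      · exact h₁ ⟨ht, by linarith [h.1]⟩
    rw [max_eq_left hout, mul_zero, sinh_zero, mul_zero]

theorem continuous_hyperbolic_kernel : Continuous (φ 1) := by
  rw [hyperbolic_kernel_eq hφ1]
  fun_prop

theorem hyperbolic_kernel_symm (t : ℝ) : φ 1 (2 - t) = φ 1 t := by
  simp only [hyperbolic_kernel_eq hφ1]
  rw [show 2 - t - 1 = -(t - 1) by ring, abs_neg]

theorem hyperbolic_kernel_eq_zero_of_nonpos (t : ℝ) (ht : t ≤ 0) : φ 1 t = 0 := by
  simp only [hyperbolic_kernel_eq hφ1]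
  rw [abs_of_nonpos (by linarith), max_eq_left (by linarith), mul_zero, sinh_zero, mul_zero]

end HyperbolicKernel

theorem fSym_eq_hSym_hyp_general (α : ℝ) (φ : ℕ → ℝ → ℝ)
    (hφ1 : ∀ t : ℝ, φ 1 t =
      if 0 ≤ t ∧ t < 1 then α / (2 * (Real.cosh α - 1)) * Real.sinh (α * t)
      else if 1 ≤ t ∧ t < 2 then α / (2 * (Real.cosh α - 1)) * Real.sinh (α * (2 - t))
      else 0)
    (hrec : ∀ q : ℕ, 2 ≤ q → ∀ t : ℝ,
      φ q t = ∫ s in (0:ℝ)..t, (φ (q - 1) s - φ (q - 1) (s - 1)))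
    (p : ℕ) (hp : 3 ≤ p)
    (θ : ℝ) :
    fSym φ p θ = (2 - 2 * Real.cos θ) * hSym φ (p - 2) θ := by
  obtain ⟨r, rfl⟩ : ∃ r, p = r + 3 := ⟨p - 3, by omega⟩
  have h1c := continuous_hyperbolic_kernel hφ1
  set b : ℤ → ℝ := fun j => φ (r + 1) ((r + 2) / 2 - j) with hb
  have hd2 (j : ℤ) : deriv (deriv (φ (r + 3))) ((((r + 3 : ℕ) : ℝ) + 1) / 2 - j) =
      b (j - 1) - 2 * b j + b (j + 1) := by
    rw [deriv_deriv_of_integral_rec hrec h1c]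
    simp only [hb]
    push_cast
    ring_nf
  have hsymm : b (-1) = b 1 := by
    have h := symm_of_integral_rec hrec h1c (hyperbolic_kernel_symm hφ1) r ((r + 2) / 2 - 1)
    simp only [hb, Int.cast_neg, Int.cast_one, ← h]
    ring_nf
  have hvanish (j : ℕ) (hj : (r + 1) / 2 < j) : b j = 0 := by
    have : (r : ℝ) + 2 ≤ 2 * j := by exact_mod_cast (by omega : r + 2 ≤ 2 * j)
    simp only [hb, Int.cast_natCast]
    exact eq_zero_of_nonpos_of_integral_rec hrec (hyperbolic_kernel_eq_zero_of_nonpos hφ1) r _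
      (by linarith)
  have hh : hSym φ (r + 1) θ = b 0 + 2 * ∑ k ∈ Finset.Icc 1 ((r + 1) / 2), b k * cos (k * θ) := by
    rw [hSym, show (((r + 1 : ℕ) : ℝ) + 1) / 2 = (r + 2) / 2 by push_cast; ring]
    simp [hb]
  rw [fSym, show (r + 3) / 2 = (r + 1) / 2 + 1 by omega, show r + 3 - 2 = r + 1 from rfl, hh,
    ← neg_secondDiff_cosSum b θ _ hsymm
    (by exact_mod_cast hvanish ((r + 1) / 2 + 1) (by omega))
    (by exact_mod_cast hvanish ((r + 1) / 2 + 2) (by omega))]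
  congr 2
  · simpa using hd2 0
  · refine Finset.sum_congr rfl fun k _ => ?_
    rw [← hd2 k, Int.cast_natCast]

theorem fSym_eq_hSym_hyp (α : ℝ) (hα : 0 < α) (φ : ℕ → ℝ → ℝ)
    (hφ1 : ∀ t : ℝ, φ 1 t =
      if 0 ≤ t ∧ t < 1 then α / (2 * (Real.cosh α - 1)) * Real.sinh (α * t)
      else if 1 ≤ t ∧ t < 2 then α / (2 * (Real.cosh α - 1)) * Real.sinh (α * (2 - t))
      else 0)
    (hrec : ∀ q : ℕ, 2 ≤ q → ∀ t : ℝ,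
      φ q t = ∫ s in (0:ℝ)..t, (φ (q - 1) s - φ (q - 1) (s - 1)))
    (p : ℕ) (hp : 3 ≤ p)
    (θ : ℝ) (hθ : θ ∈ Set.Icc (-Real.pi) Real.pi) :
    fSym φ p θ = (2 - 2 * Real.cos θ) * hSym φ (p - 2) θ :=
  fSym_eq_hSym_hyp_general α φ hφ1 hrec p hp θ
end

section
/- Let 0 < α < π and let φ be the cardinal trigonometric GB-splines with phase α. Define, for p ≥ 1, h_p^{T_α}(θ) := φ p ((p+1)/2) + 2·Σ_{k=1}^{⌊p/2⌋} φ p ((p+1)/2 − k)·cos(kθ), and, for p ≥ 2, f_p^{T_α}(θ) := −φ̈ p ((p+1)/2) − 2·Σ_{k=1}^{⌊p/2⌋} φ̈ p ((p+1)/2 − k)·cos(kθ), where φ̈ p is the second derivative of t ↦ φ p t. Then for every integer p ≥ 3 and every θ ∈ [−π, π]: f_p^{T_α}(θ) = (2 − 2·cos θ) · h_{p−2}^{T_α}(θ). -/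
open Real MeasureTheory

/-!
Differentiating the defining recursion twice gives `φ p'' t = φ (p-2) t - 2 φ (p-2) (t-1) + φ (p-2) (t-2)`,
so the coefficients of `f_p` are the negated second differences of the samples
`b k = φ (p-2) ((p-1)/2 - k)`. By induction `φ (p-2)` is symmetric about `(p-1)/2` and vanishes on
`(-∞, 0]`, so `b` is even and finitely supported, and summation by parts turns the cosine series of
`-(b (k-1) - 2 b k + b (k+1))` into `(2 - 2 cos θ)` times the cosine series of `b`.
-/

open Finset

theorem sum_Icc_second_difference_mul_cos (b : ℕ → ℝ) (θ : ℝ) (n : ℕ) :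
    -(2 * b 1 - 2 * b 0) - 2 * ∑ k ∈ Icc 1 n, (b (k - 1) - 2 * b k + b (k + 1)) * cos (k * θ) =
      (2 - 2 * cos θ) * (b 0 + 2 * ∑ k ∈ Icc 1 n, b k * cos (k * θ)) +
        2 * cos ((n + 1) * θ) * b n - 2 * cos (n * θ) * b (n + 1) := by
  induction n with
  | zero =>
    simp only [Icc_eq_empty_of_lt zero_lt_one, sum_empty, Nat.cast_zero, zero_add, one_mul,
      zero_mul, cos_zero]
    ring
  | succ n ih =>
    rw [sum_Icc_succ_top (by omega), sum_Icc_succ_top (by omega), Nat.add_sub_cancel]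
    have hcos : cos ((n + 2) * θ) + cos (n * θ) = 2 * cos θ * cos ((n + 1) * θ) := by
      rw [show (n + 2) * θ = (n + 1) * θ + θ by ring, show n * θ = (n + 1) * θ - θ by ring,
        cos_add, cos_sub]
      ring
    push_cast
    rw [show ((n : ℝ) + 1 + 1) = n + 2 by ring]
    linear_combination ih - 2 * b (n + 1) * hcos

def IsSplineRecursion (φ : ℕ → ℝ → ℝ) : Prop :=
  ∀ q : ℕ, 2 ≤ q → ∀ t : ℝ, φ q t = ∫ s in (0:ℝ)..t, (φ (q - 1) s - φ (q - 1) (s - 1))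

namespace IsSplineRecursion

variable {φ : ℕ → ℝ → ℝ} (hrec : IsSplineRecursion φ)
include hrec

theorem eq_integral_succ {n : ℕ} (hn : 1 ≤ n) :
    φ (n + 1) = fun t => ∫ s in (0:ℝ)..t, (φ n s - φ n (s - 1)) :=
  funext fun t => by simpa using hrec (n + 1) (by omega) t

theorem hasDerivAt_succ {n : ℕ} (hn : 1 ≤ n) (hc : Continuous (φ n)) (t : ℝ) :
    HasDerivAt (φ (n + 1)) (φ n t - φ n (t - 1)) t := by
  rw [hrec.eq_integral_succ hn]
  exact ((by fun_prop : Continuous fun s => φ n s - φ n (s - 1)).integral_hasStrictDerivAt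
    0 t).hasDerivAt

theorem continuous (h1 : Continuous (φ 1)) {n : ℕ} (hn : 1 ≤ n) : Continuous (φ n) := by
  induction n, hn using Nat.le_induction with
  | base => exact h1
  | succ n hn ih =>
    exact continuous_iff_continuousAt.2 fun t => (hrec.hasDerivAt_succ hn ih t).continuousAt

theorem deriv_deriv (h1 : Continuous (φ 1)) {n : ℕ} (hn : 1 ≤ n) (t : ℝ) :
    deriv (deriv (φ (n + 2))) t = φ n t - 2 * φ n (t - 1) + φ n (t - 2) := by
  have hc : ∀ m, 1 ≤ m → Continuous (φ m) := fun m hm => hrec.continuous h1 hm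
  have hderiv : deriv (φ (n + 2)) = fun u => φ (n + 1) u - φ (n + 1) (u - 1) :=
    funext fun u => (hrec.hasDerivAt_succ (by omega) (hc _ (by omega)) u).deriv
  have hshift := (hrec.hasDerivAt_succ hn (hc n hn) (t - 1)).comp_sub_const t 1
  rw [hderiv]
  refine ((hrec.hasDerivAt_succ hn (hc n hn) t).sub hshift).deriv.trans ?_
  rw [sub_sub t 1 1, one_add_one_eq_two]
  ring

theorem eq_zero_of_nonpos (h1 : ∀ t ≤ 0, φ 1 t = 0) {n : ℕ} (hn : 1 ≤ n) {t : ℝ}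
    (ht : t ≤ 0) : φ n t = 0 := by
  induction n, hn using Nat.le_induction generalizing t with
  | base => exact h1 t ht
  | succ n hn ih =>
    rw [hrec.eq_integral_succ hn]
    dsimp only
    rw [intervalIntegral.integral_congr (g := fun _ => (0 : ℝ))]
    · simp
    · intro s hs
      have hs0 : s ≤ 0 := by rcases Set.mem_uIcc.1 hs with h | h <;> linarith [h.1, h.2]
      simp only [ih hs0, ih (by linarith : s - 1 ≤ 0), sub_zero]

theorem symmetric (h1c : Continuous (φ 1)) (h1s : ∀ t, φ 1 (2 - t) = φ 1 t) {n : ℕ}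
    (hn : 1 ≤ n) (t : ℝ) : φ n (n + 1 - t) = φ n t := by
  induction n, hn using Nat.le_induction generalizing t with
  | base => norm_num [one_add_one_eq_two, h1s]
  | succ n hn ih =>
    have hc := hrec.continuous h1c hn
    set D : ℝ → ℝ := fun u => φ (n + 1) (n + 2 - u) - φ (n + 1) u
    -- by `ih`, the integrand `u ↦ φ n u - φ n (u - 1)` is odd about `(n + 2) / 2`
    have hD : ∀ u, HasDerivAt D 0 u := by
      intro u
      have h := ((hrec.hasDerivAt_succ hn hc (n + 2 - u)).comp u
        ((hasDerivAt_id u).const_sub _)).sub (hrec.hasDerivAt_succ hn hc u)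
      refine h.congr_deriv ?_
      rw [show (n : ℝ) + 2 - u = n + 1 - (u - 1) by ring, ih,
        show (n : ℝ) + 1 - (u - 1) - 1 = n + 1 - u by ring, ih]
      ring
    have hconst := is_const_of_deriv_eq_zero (fun u => (hD u).differentiableAt)
      (fun u => (hD u).deriv) t ((n + 2) / 2)
    have hmid : D ((n + 2) / 2) = 0 := by
      simp only [D]
      rw [show (n : ℝ) + 2 - (n + 2) / 2 = (n + 2) / 2 by ring, sub_self]
    push_cast
    rw [show (n : ℝ) + 1 + 1 = n + 2 by ring]
    exact sub_eq_zero.1 (hconst.trans hmid)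

theorem fSym_eq_mul_hSym (h1c : Continuous (φ 1)) (h1z : ∀ t ≤ 0, φ 1 t = 0)
    (h1s : ∀ t, φ 1 (2 - t) = φ 1 t) {p : ℕ} (hp : 3 ≤ p) (θ : ℝ) :
    fSym φ p θ = (2 - 2 * cos θ) * hSym φ (p - 2) θ := by
  obtain ⟨q, rfl⟩ : ∃ q, p = q + 2 := ⟨p - 2, by omega⟩
  have hq : 1 ≤ q := by omega
  set b : ℕ → ℝ := fun k => φ q ((q + 1) / 2 - k)
  have hb_zero : ∀ k, q / 2 + 1 ≤ k → b k = 0 := by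
    intro k hk
    have : (q : ℝ) + 1 ≤ 2 * k := by exact_mod_cast (by omega : q + 1 ≤ 2 * k)
    exact hrec.eq_zero_of_nonpos h1z hq (by linarith)
  have hb : ∀ (x : ℝ) (k : ℕ), x = (q + 1) / 2 - k → φ q x = b k := by rintro x k rfl; rfl
  have hcenter : φ q ((((q + 2 : ℕ) : ℝ) + 1) / 2) = b 1 := by
    rw [← hrec.symmetric h1c h1s hq]
    exact hb _ 1 (by push_cast; ring)
  have hf : fSym φ (q + 2) θ = -(2 * b 1 - 2 * b 0) -
      2 * ∑ k ∈ Icc 1 (q / 2 + 1), (b (k - 1) - 2 * b k + b (k + 1)) * cos (k * θ) := by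
    simp only [fSym, hrec.deriv_deriv h1c hq, Nat.add_div_right q two_pos]
    rw [hcenter, hb _ 0 (by push_cast; ring), hb _ 1 (by push_cast; ring)]
    congr 2
    · ring
    refine Finset.sum_congr rfl fun k hk => ?_
    have hk : 1 ≤ k := (mem_Icc.1 hk).1
    rw [hb _ (k - 1) (by push_cast [hk]; ring), hb _ k (by push_cast; ring),
      hb _ (k + 1) (by push_cast; ring)]
  have hh : hSym φ q θ = b 0 + 2 * ∑ k ∈ Icc 1 (q / 2 + 1), b k * cos (k * θ) := by
    rw [sum_Icc_succ_top (by omega), hb_zero _ le_rfl, zero_mul, add_zero]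
    simp only [hSym]
    rw [hb _ 0 (by simp)]
  rw [hf, Nat.add_sub_cancel, hh, sum_Icc_second_difference_mul_cos, hb_zero _ le_rfl,
    hb_zero (q / 2 + 1 + 1) (by omega)]
  ring

end IsSplineRecursion

theorem piecewise_sin_eq_sin_min_max (α C t : ℝ) :
    (if 0 ≤ t ∧ t < 1 then C * sin (α * t)
      else if 1 ≤ t ∧ t < 2 then C * sin (α * (2 - t)) else 0) =
      C * sin (α * min (max t 0) (max (2 - t) 0)) := by
  split_ifs with h₁ h₂
  · rw [max_eq_left h₁.1, max_eq_left (by linarith), min_eq_left (by linarith)]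
  · rw [max_eq_left (by linarith), max_eq_left (by linarith), min_eq_right (by linarith)]
  · rcases le_or_gt 0 t with h | h
    · have h2 : 2 ≤ t := by push Not at h₁ h₂; exact h₂ (h₁ h)
      rw [max_eq_right (by linarith : 2 - t ≤ 0), min_eq_right (le_max_right t 0)]
      simp
    · rw [max_eq_right h.le, min_eq_left (le_max_right _ _)]
      simp

theorem fSym_eq_hSym_trig_general (α : ℝ) (φ : ℕ → ℝ → ℝ)
    (hφ1 : ∀ t : ℝ, φ 1 t =
      if 0 ≤ t ∧ t < 1 then α / (2 * (1 - Real.cos α)) * Real.sin (α * t)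
      else if 1 ≤ t ∧ t < 2 then α / (2 * (1 - Real.cos α)) * Real.sin (α * (2 - t))
      else 0)
    (hrec : ∀ q : ℕ, 2 ≤ q → ∀ t : ℝ,
      φ q t = ∫ s in (0:ℝ)..t, (φ (q - 1) s - φ (q - 1) (s - 1)))
    (p : ℕ) (hp : 3 ≤ p)
    (θ : ℝ) :
    fSym φ p θ = (2 - 2 * Real.cos θ) * hSym φ (p - 2) θ := by
  have h1 : φ 1 = fun t => α / (2 * (1 - cos α)) * sin (α * min (max t 0) (max (2 - t) 0)) :=
    funext fun t => (hφ1 t).trans (piecewise_sin_eq_sin_min_max _ _ t)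
  have h1c : Continuous (φ 1) := by rw [h1]; fun_prop
  have h1z : ∀ t ≤ 0, φ 1 t = 0 := fun t ht => by simp [h1, max_eq_right ht]
  have h1s : ∀ t, φ 1 (2 - t) = φ 1 t := fun t => by simp only [h1, sub_sub_cancel, min_comm]
  exact IsSplineRecursion.fSym_eq_mul_hSym hrec h1c h1z h1s hp θ

theorem fSym_eq_hSym_trig (α : ℝ) (hα : 0 < α) (hαπ : α < Real.pi) (φ : ℕ → ℝ → ℝ)
    (hφ1 : ∀ t : ℝ, φ 1 t =
      if 0 ≤ t ∧ t < 1 then α / (2 * (1 - Real.cos α)) * Real.sin (α * t)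
      else if 1 ≤ t ∧ t < 2 then α / (2 * (1 - Real.cos α)) * Real.sin (α * (2 - t))
      else 0)
    (hrec : ∀ q : ℕ, 2 ≤ q → ∀ t : ℝ,
      φ q t = ∫ s in (0:ℝ)..t, (φ (q - 1) s - φ (q - 1) (s - 1)))
    (p : ℕ) (hp : 3 ≤ p)
    (θ : ℝ) (hθ : θ ∈ Set.Icc (-Real.pi) Real.pi) :
    fSym φ p θ = (2 - 2 * Real.cos θ) * hSym φ (p - 2) θ :=
  fSym_eq_hSym_trig_general α φ hφ1 hrec p hp θ
end

section
/- Let 0 < α < π and let φ be the cardinal trigonometric GB-splines with phase α. Define, for p ≥ 1, h_p^{T_α}(θ) := φ p ((p+1)/2) + 2·Σ_{k=1}^{⌊p/2⌋} φ p ((p+1)/2 − k)·cos(kθ). Then for every integer p ≥ 2: h_p^{T_α}(0) = 1, and for every θ ∈ [−π, π] one has h_p^{T_α}(θ) ≤ 1. -/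
open Real MeasureTheory

theorem hSym_trig_le_one (α : ℝ) (hα : 0 < α) (hαπ : α < Real.pi) (φ : ℕ → ℝ → ℝ)
    (hφ1 : ∀ t : ℝ, φ 1 t =
      if 0 ≤ t ∧ t < 1 then α / (2 * (1 - Real.cos α)) * Real.sin (α * t)
      else if 1 ≤ t ∧ t < 2 then α / (2 * (1 - Real.cos α)) * Real.sin (α * (2 - t))
      else 0)
    (hrec : ∀ q : ℕ, 2 ≤ q → ∀ t : ℝ,
      φ q t = ∫ s in (0:ℝ)..t, (φ (q - 1) s - φ (q - 1) (s - 1)))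
    (p : ℕ) (hp : 2 ≤ p) :
    hSym φ p 0 = 1 ∧ ∀ θ ∈ Set.Icc (-Real.pi) Real.pi, hSym φ p θ ≤ 1 := by
  have hcos : Real.cos α < 1 := by
    have h := Real.cos_lt_cos_of_nonneg_of_le_pi le_rfl hαπ.le hα
    simpa using h
  set c0 : ℝ := α / (2 * (1 - Real.cos α)) with hc0
  have hc0pos : 0 < c0 := div_pos hα (by linarith)
  -- helper: integral of a function vanishing on the interval
  have hvanish : ∀ (f : ℝ → ℝ) (a b : ℝ), (∀ t ∈ Set.uIcc a b, f t = 0) →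
      ∫ t in a..b, f t = 0 := by
    intro f a b h
    rw [intervalIntegral.integral_congr (g := fun _ => (0:ℝ)) h]
    simp
  -- basic facts about φ 1
  have hzl1 : ∀ t : ℝ, t ≤ 0 → φ 1 t = 0 := by
    intro t ht
    rw [hφ1]
    split_ifs with h1 h2
    · have : t = 0 := le_antisymm ht h1.1
      simp [this]
    · linarith [h2.1]
    · rfl
  have hzr1 : ∀ t : ℝ, (2:ℝ) ≤ t → φ 1 t = 0 := by
    intro t ht
    rw [hφ1]
    split_ifs with h1 h2
    · linarith [h1.2]
    · linarith [h2.2]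
    · rfl
  have hpos1 : ∀ t : ℝ, 0 ≤ φ 1 t := by
    intro t
    rw [hφ1]
    split_ifs with h1 h2
    · have hs : 0 ≤ Real.sin (α * t) := by
        apply Real.sin_nonneg_of_nonneg_of_le_pi
        · nlinarith [h1.1]
        · nlinarith [h1.2]
      exact mul_nonneg hc0pos.le hs
    · have hs : 0 ≤ Real.sin (α * (2 - t)) := by
        apply Real.sin_nonneg_of_nonneg_of_le_pi
        · nlinarith [h2.2]
        · nlinarith [h2.1]
      exact mul_nonneg hc0pos.le hs
    · exact le_refl 0
  have hsym1 : ∀ t : ℝ, φ 1 t = φ 1 (2 - t) := by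
    intro t
    rcases le_or_gt t 0 with h0 | h0
    · rw [hzl1 t h0, hzr1 (2 - t) (by linarith)]
    · rcases le_or_gt 2 t with h2 | h2
      · rw [hzr1 t h2, hzl1 (2 - t) (by linarith)]
      · rcases lt_or_ge t 1 with h1 | h1
        · rw [hφ1, hφ1, if_pos ⟨h0.le, h1⟩, if_neg (by intro h; linarith [h.2]),
            if_pos ⟨by linarith, by linarith⟩]
          norm_num
        · rcases eq_or_lt_of_le h1 with he | h1'
          · rw [← he]
            norm_num
          · rw [hφ1, hφ1, if_neg (by intro h; linarith [h.2]), if_pos ⟨h1, h2⟩,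
              if_pos ⟨by linarith, by linarith⟩]
  have hmeas1 : Measurable (φ 1) := by
    have he : φ 1 = fun t => if 0 ≤ t ∧ t < 1 then c0 * Real.sin (α * t)
        else if 1 ≤ t ∧ t < 2 then c0 * Real.sin (α * (2 - t)) else 0 := funext hφ1
    rw [he]
    apply Measurable.ite (measurableSet_Ico (a := (0:ℝ)) (b := 1)) ?_
      (Measurable.ite (measurableSet_Ico (a := (1:ℝ)) (b := 2)) ?_ measurable_const)
    · fun_prop
    · fun_prop
  have hbd1 : ∀ t : ℝ, ‖φ 1 t‖ ≤ c0 := by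
    intro t
    rw [Real.norm_eq_abs, hφ1]
    split_ifs with h1 h2
    · rw [abs_mul, abs_of_pos hc0pos]
      nlinarith [abs_le_one_iff_mul_self_le_one.mpr (by nlinarith [Real.sin_le_one (α*t), Real.neg_one_le_sin (α*t)] : Real.sin (α*t) * Real.sin (α*t) ≤ 1), abs_nonneg (Real.sin (α*t))]
    · rw [abs_mul, abs_of_pos hc0pos]
      nlinarith [abs_le_one_iff_mul_self_le_one.mpr (by nlinarith [Real.sin_le_one (α*(2-t)), Real.neg_one_le_sin (α*(2-t))] : Real.sin (α*(2-t)) * Real.sin (α*(2-t)) ≤ 1), abs_nonneg (Real.sin (α*(2-t)))]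
    · simp [hc0pos.le]
  have hint1 : ∀ a b : ℝ, IntervalIntegrable (φ 1) volume a b := by
    intro a b
    rw [intervalIntegrable_iff]
    apply MeasureTheory.Measure.integrableOn_of_bounded (M := c0)
      (measure_Ioc_lt_top).ne hmeas1.aestronglyMeasurable
    filter_upwards with t using hbd1 t
  -- the total integral of φ 1 over [0,2] is 1
  have hi01 : ∫ t in (0:ℝ)..1, φ 1 t = c0 * ((1 - Real.cos α) / α) := by
    have hcg : Set.EqOn (φ 1) (fun t => c0 * Real.sin (α * t)) (Set.uIcc 0 1) := by
      intro t ht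
      rw [Set.uIcc_of_le (by norm_num : (0:ℝ) ≤ 1)] at ht
      rw [hφ1]
      rcases lt_or_eq_of_le ht.2 with h | h
      · rw [if_pos ⟨ht.1, h⟩]
      · rw [h]
        norm_num
    rw [intervalIntegral.integral_congr hcg, intervalIntegral.integral_const_mul]
    congr 1
    rw [intervalIntegral.integral_comp_mul_left (fun x => Real.sin x) hα.ne']
    simp [integral_sin, smul_eq_mul]
    field_simp
  have hi12 : ∫ t in (1:ℝ)..2, φ 1 t = c0 * ((1 - Real.cos α) / α) := by
    have hcg : Set.EqOn (φ 1) (fun t => c0 * Real.sin (α * (2 - t))) (Set.uIcc 1 2) := by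
      intro t ht
      rw [Set.uIcc_of_le (by norm_num : (1:ℝ) ≤ 2)] at ht
      rw [hφ1]
      rcases lt_or_eq_of_le ht.2 with h | h
      · rw [if_neg (by intro hc; linarith [hc.2, ht.1]), if_pos ⟨ht.1, h⟩]
      · rw [h]
        norm_num
    rw [intervalIntegral.integral_congr hcg, intervalIntegral.integral_const_mul]
    congr 1
    rw [intervalIntegral.integral_comp_sub_left (fun u => Real.sin (α * u)) 2]
    norm_num
    rw [intervalIntegral.integral_comp_mul_left (fun x => Real.sin x) hα.ne']
    simp [integral_sin, smul_eq_mul]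
    field_simp
  have htot1base : ∫ t in (0:ℝ)..2, φ 1 t = 1 := by
    have hde : (1:ℝ) - Real.cos α ≠ 0 := by linarith
    have hhalf : c0 * ((1 - Real.cos α) / α) = 1 / 2 := by
      rw [hc0]
      field_simp
    rw [← intervalIntegral.integral_add_adjacent_intervals (hint1 0 1) (hint1 1 2), hi01, hi12,
      hhalf]
    norm_num
  -- extension of total integral to larger intervals
  have hext : ∀ (q : ℕ), (∀ a b : ℝ, IntervalIntegrable (φ q) volume a b) →
      (∀ t : ℝ, t ≤ 0 → φ q t = 0) → (∀ t : ℝ, (q:ℝ) + 1 ≤ t → φ q t = 0) →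
      (∫ t in (0:ℝ)..((q:ℝ)+1), φ q t) = 1 →
      ∀ a b : ℝ, a ≤ 0 → (q:ℝ) + 1 ≤ b → ∫ t in a..b, φ q t = 1 := by
    intro q hint h0 h1 hbase a b ha hb
    have e1 : ∫ t in a..(0:ℝ), φ q t = 0 := by
      apply hvanish
      intro t ht
      rw [Set.uIcc_of_le ha] at ht
      exact h0 t ht.2
    have e2 : ∫ t in ((q:ℝ)+1)..b, φ q t = 0 := by
      apply hvanish
      intro t ht
      rw [Set.uIcc_of_le hb] at ht
      exact h1 t ht.1
    have s1 := intervalIntegral.integral_add_adjacent_intervals (hint a 0) (hint 0 ((q:ℝ)+1))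
    have s2 := intervalIntegral.integral_add_adjacent_intervals (hint a ((q:ℝ)+1)) (hint ((q:ℝ)+1) b)
    rw [← s2, ← s1, e1, e2, hbase]
    ring
  have htot1 : ∀ a b : ℝ, a ≤ 0 → (1:ℝ) + 1 ≤ b → ∫ t in a..b, φ 1 t = 1 := by
    have := hext 1 hint1 hzl1 (by intro t ht; exact hzr1 t (by push_cast at ht ⊢; linarith))
      (by push_cast; norm_num [htot1base])
    intro a b ha hb
    exact this a b ha (by push_cast; linarith)
  -- the convolution formula for higher levels
  have hconv : ∀ q : ℕ, 1 ≤ q → (∀ a b : ℝ, IntervalIntegrable (φ q) volume a b) →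
      (∀ t : ℝ, t ≤ 0 → φ q t = 0) →
      ∀ t : ℝ, φ (q+1) t = ∫ s in (t-1)..t, φ q s := by
    intro q hq hint h0 t
    rw [hrec (q+1) (by omega)]
    simp only [Nat.add_sub_cancel]
    have hints : IntervalIntegrable (fun s => φ q (s-1)) volume 0 t := by
      have h2 := (hint (-1) (t-1)).comp_sub_right 1
      have e1 : (-1:ℝ) + 1 = 0 := by norm_num
      have e2 : t - 1 + 1 = t := by ring
      rwa [e1, e2] at h2
    rw [intervalIntegral.integral_sub (hint 0 t) hints,
      intervalIntegral.integral_comp_sub_right (fun s => φ q s) 1]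
    have e0 : ∫ s in ((0:ℝ)-1)..(t-1), φ q s = ∫ s in (0:ℝ)..(t-1), φ q s := by
      rw [← intervalIntegral.integral_add_adjacent_intervals (hint (0-1) 0) (hint 0 (t-1))]
      have hz : ∫ s in ((0:ℝ)-1)..(0:ℝ), φ q s = 0 := by
        apply hvanish
        intro s hs
        rw [Set.uIcc_of_le (by norm_num)] at hs
        exact h0 s hs.2
      rw [hz, zero_add]
    rw [e0, intervalIntegral.integral_interval_sub_left (hint 0 t) (hint 0 (t-1))]
  -- the main induction
  set P : ℕ → Prop := fun q =>
    (∀ a b : ℝ, IntervalIntegrable (φ q) volume a b) ∧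
    (∀ t : ℝ, 0 ≤ φ q t) ∧
    (∀ t : ℝ, t ≤ 0 → φ q t = 0) ∧
    (∀ t : ℝ, (q:ℝ) + 1 ≤ t → φ q t = 0) ∧
    (∀ t : ℝ, φ q t = φ q ((q:ℝ) + 1 - t)) ∧
    (∀ a b : ℝ, a ≤ 0 → (q:ℝ) + 1 ≤ b → ∫ t in a..b, φ q t = 1) with hP
  have main : ∀ q : ℕ, 1 ≤ q → P q := by
    intro q hq
    induction q, hq using Nat.le_induction with
    | base =>
      refine ⟨hint1, hpos1, hzl1, ?_, ?_, ?_⟩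
      · intro t ht
        exact hzr1 t (by push_cast at ht; linarith)
      · intro t
        have e : ((1:ℕ):ℝ) + 1 - t = 2 - t := by push_cast; ring
        rw [e]
        exact hsym1 t
      · intro a b ha hb
        exact htot1 a b ha (by push_cast at hb; linarith)
    | succ q hq ih =>
      obtain ⟨hint, hpos, hzl, hzr, hsymq, htot⟩ := ih
      have hcv := hconv q hq hint hzl
      have hcont : Continuous (φ (q+1)) := by
        have he : φ (q+1) = fun t => ∫ s in (0:ℝ)..t, (φ q s - φ q (s-1)) := by
          funext t
          rw [hrec (q+1) (by omega)]
          simp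
        rw [he]
        apply intervalIntegral.continuous_primitive
        intro a b
        apply (hint a b).sub
        have := (hint (a-1) (b-1)).comp_sub_right 1
        convert this using 2 <;> ring
      have hintq1 : ∀ a b : ℝ, IntervalIntegrable (φ (q+1)) volume a b :=
        fun a b => hcont.intervalIntegrable a b
      have hposq1 : ∀ t : ℝ, 0 ≤ φ (q+1) t := by
        intro t
        rw [hcv t]
        exact intervalIntegral.integral_nonneg (by linarith) (fun u _ => hpos u)
      have hzlq1 : ∀ t : ℝ, t ≤ 0 → φ (q+1) t = 0 := by
        intro t ht
        rw [hcv t]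
        apply hvanish
        intro s hs
        rw [Set.uIcc_of_le (by linarith)] at hs
        exact hzl s (by linarith [hs.2])
      have hzrq1 : ∀ t : ℝ, ((q+1:ℕ):ℝ) + 1 ≤ t → φ (q+1) t = 0 := by
        intro t ht
        push_cast at ht
        rw [hcv t]
        apply hvanish
        intro s hs
        rw [Set.uIcc_of_le (by linarith)] at hs
        exact hzr s (by linarith [hs.1])
      have hsymq1 : ∀ t : ℝ, φ (q+1) t = φ (q+1) (((q+1:ℕ):ℝ) + 1 - t) := by
        intro t
        rw [hcv t, hcv _]
        push_cast
        have e1 : ∫ s in ((q:ℝ)+1+1-t-1)..((q:ℝ)+1+1-t), φ q s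
            = ∫ s in ((q:ℝ)+1+1-t-1)..((q:ℝ)+1+1-t), φ q ((q:ℝ)+1-s) :=
          intervalIntegral.integral_congr (fun s _ => hsymq s)
        rw [e1, intervalIntegral.integral_comp_sub_left (fun s => φ q s) ((q:ℝ)+1)]
        have e2 : (q:ℝ)+1 - ((q:ℝ)+1+1-t) = t - 1 := by ring
        have e3 : (q:ℝ)+1 - ((q:ℝ)+1+1-t-1) = t := by ring
        rw [e2, e3]
      have htotq1 : ∀ a b : ℝ, a ≤ 0 → ((q+1:ℕ):ℝ) + 1 ≤ b →
          ∫ t in a..b, φ (q+1) t = 1 := by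
        intro a b ha hb
        push_cast at hb
        set F : ℝ → ℝ := fun t => ∫ s in (0:ℝ)..t, φ q s with hF
        have hFcont : Continuous F := intervalIntegral.continuous_primitive hint 0
        have hFint : ∀ a b : ℝ, IntervalIntegrable F volume a b :=
          fun a b => hFcont.intervalIntegrable a b
        have hφeq : ∀ t : ℝ, φ (q+1) t = F t - F (t-1) := by
          intro t
          rw [hcv t, ← intervalIntegral.integral_interval_sub_left (hint 0 t) (hint 0 (t-1))]
        have hFsh : IntervalIntegrable (fun t => F (t-1)) volume a b := by
          have := (hFint (a-1) (b-1)).comp_sub_right 1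
          convert this using 2 <;> ring
        have c1 : ∫ t in a..b, φ (q+1) t
            = (∫ t in a..b, F t) - ∫ t in (a-1)..(b-1), F t := by
          rw [intervalIntegral.integral_congr (g := fun t => F t - F (t-1))
            (fun t _ => hφeq t),
            intervalIntegral.integral_sub (hFint a b) hFsh,
            intervalIntegral.integral_comp_sub_right F 1]
        have s1 := intervalIntegral.integral_add_adjacent_intervals (hFint a (b-1)) (hFint (b-1) b)
        have s2 := intervalIntegral.integral_add_adjacent_intervals (hFint (a-1) a) (hFint a (b-1))
        have eA : ∫ t in (a-1)..a, F t = 0 := by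
          apply hvanish
          intro t ht
          rw [Set.uIcc_of_le (by linarith)] at ht
          apply hvanish
          intro s hs
          rw [Set.uIcc_comm, Set.uIcc_of_le (show t ≤ 0 by linarith [ht.2])] at hs
          exact hzl s hs.2
        have eB : ∫ t in (b-1)..b, F t = 1 := by
          have hcg : Set.EqOn F (fun _ => (1:ℝ)) (Set.uIcc (b-1) b) := by
            intro t ht
            rw [Set.uIcc_of_le (by linarith)] at ht
            exact htot 0 t le_rfl (by linarith [ht.1])
          rw [intervalIntegral.integral_congr hcg]
          simp
        rw [c1]
        linarith [s1, s2]
      exact ⟨hintq1, hposq1, hzlq1, hzrq1, hsymq1, htotq1⟩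
  -- instantiate at p and p-1
  obtain ⟨hintp, hposp, hzlp, hzrp, hsymp, htotp⟩ := main p (by omega)
  obtain ⟨hintp1, hposp1, hzlp1, hzrp1, hsymp1, htotp1⟩ := main (p-1) (by omega)
  have hconvp : ∀ t : ℝ, φ p t = ∫ s in (t-1)..t, φ (p-1) s := by
    have h := hconv (p-1) (by omega) hintp1 hzlp1
    have hpe : p - 1 + 1 = p := by omega
    rw [hpe] at h
    exact h
  have hcastp1 : ((p-1:ℕ):ℝ) = (p:ℝ) - 1 := by
    have : (1:ℕ) ≤ p := by omega
    push_cast [Nat.cast_sub this]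
    ring
  set m : ℕ := p / 2 with hm
  set cc : ℝ := ((p:ℝ) + 1) / 2 with hcc
  have hm2 : 2 * (m:ℝ) ≤ (p:ℝ) := by
    have : 2 * m ≤ p := by omega
    exact_mod_cast this
  have hm1 : (p:ℝ) ≤ 2 * (m:ℝ) + 1 := by
    have : p ≤ 2 * m + 1 := by omega
    exact_mod_cast this
  -- the key identity
  have key : φ p cc + 2 * ∑ k ∈ Finset.Icc 1 m, φ p (cc - (k:ℝ)) = 1 := by
    have hrefl : ∀ k : ℕ, φ p (cc + (k:ℝ)) = φ p (cc - (k:ℝ)) := by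
      intro k
      rw [hsymp (cc + (k:ℝ))]
      congr 1
      rw [hcc]
      ring
    set a : ℕ → ℝ := fun i => cc - (m:ℝ) - 1 + (i:ℝ) with ha
    have hstep : ∀ i : ℕ, φ p (a (i+1)) = ∫ s in a i..a (i+1), φ (p-1) s := by
      intro i
      rw [hconvp]
      congr 1
      simp only [ha]
      push_cast
      ring
    have htel : ∑ i ∈ Finset.range (2*m+1), φ p (a (i+1)) = 1 := by
      rw [Finset.sum_congr rfl (fun i _ => hstep i),
        intervalIntegral.sum_integral_adjacent_intervals (fun k _ => hintp1 _ _)]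
      apply htotp1
      · simp only [ha]
        push_cast
        rw [hcc]
        linarith
      · simp only [ha]
        push_cast
        rw [hcastp1, hcc]
        linarith
    have hsplit : ∑ i ∈ Finset.range (2*m+1), φ p (a (i+1))
        = (∑ k ∈ Finset.Icc 1 m, φ p (cc - (k:ℝ)))
          + (φ p cc + ∑ k ∈ Finset.Icc 1 m, φ p (cc + (k:ℝ))) := by
      have h2m1 : 2*m+1 = m + (m+1) := by omega
      rw [h2m1, Finset.sum_range_add]
      congr 1
      · rw [← Finset.sum_range_reflect]
        rw [show Finset.Icc 1 m = Finset.Ico 1 (m+1) from (Finset.Ico_add_one_right_eq_Icc 1 m).symm,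
          Finset.sum_Ico_eq_sum_range]
        simp only [Nat.add_sub_cancel]
        apply Finset.sum_congr rfl
        intro j hj
        have hjm : j < m := Finset.mem_range.mp hj
        congr 1
        have he : m - 1 - j + 1 = m - j := by omega
        rw [he]
        simp only [ha]
        push_cast [Nat.cast_sub hjm.le]
        ring
      · rw [Finset.sum_range_succ']
        rw [add_comm (φ p cc)]
        congr 1
        · rw [show Finset.Icc 1 m = Finset.Ico 1 (m+1) from (Finset.Ico_add_one_right_eq_Icc 1 m).symm,
            Finset.sum_Ico_eq_sum_range]
          simp only [Nat.add_sub_cancel]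
          apply Finset.sum_congr rfl
          intro i _
          congr 1
          simp only [ha]
          push_cast
          ring
        · congr 1
          simp only [ha]
          push_cast
          ring
    have hsum : ∑ k ∈ Finset.Icc 1 m, φ p (cc + (k:ℝ))
        = ∑ k ∈ Finset.Icc 1 m, φ p (cc - (k:ℝ)) :=
      Finset.sum_congr rfl (fun k _ => hrefl k)
    rw [hsplit, hsum] at htel
    linarith [htel]
  have h0 : hSym φ p 0 = 1 := by
    rw [hSym]
    simp only [mul_zero, Real.cos_zero, mul_one]
    exact key
  refine ⟨h0, ?_⟩
  intro θ _
  rw [← h0]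
  rw [hSym, hSym]
  simp only [mul_zero, Real.cos_zero, mul_one]
  have hsle : ∑ k ∈ Finset.Icc 1 (p/2), φ p (((p:ℝ)+1)/2 - (k:ℝ)) * Real.cos ((k:ℝ) * θ)
      ≤ ∑ k ∈ Finset.Icc 1 (p/2), φ p (((p:ℝ)+1)/2 - (k:ℝ)) := by
    apply Finset.sum_le_sum
    intro k _
    have h1 := hposp (((p:ℝ)+1)/2 - (k:ℝ))
    nlinarith [Real.cos_le_one ((k:ℝ) * θ)]
  linarith
end

section
/- Let α > 0. For an integer p ≥ 3 and θ ∈ [−π, π], define r_p^{H_α}(θ) := (α²/(cosh α − 1)) · Σ_{k ∈ ℤ, k ≠ 0} ((cosh α − cos θ)/((θ + 2kπ)² + α²)) · (−1)^{k(p−1)}/(θ + 2kπ)^{p−1}, a series which converges absolutely. Then for every odd integer p ≥ 3 and every θ ∈ [−π, π]: (2·sin(θ/2))^{p−1} · r_p^{H_α}(θ) ≥ 0. -/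
open Real MeasureTheory

theorem rSym_hyp_nonneg (α : ℝ) (hα : 0 < α)
    (p : ℕ) (hp : 3 ≤ p) (hodd : Odd p)
    (θ : ℝ) (hθ : θ ∈ Set.Icc (-Real.pi) Real.pi) :
    Summable (fun k : {k : ℤ // k ≠ 0} =>
      |(Real.cosh α - Real.cos θ) / ((θ + 2 * ((k : ℤ) : ℝ) * Real.pi) ^ 2 + α ^ 2) *
        ((-1 : ℝ) ^ ((k : ℤ) * ((p : ℤ) - 1)) /
          (θ + 2 * ((k : ℤ) : ℝ) * Real.pi) ^ (p - 1))|) ∧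
    0 ≤ (2 * Real.sin (θ / 2)) ^ (p - 1) *
      (α ^ 2 / (Real.cosh α - 1) *
        ∑' k : {k : ℤ // k ≠ 0},
          (Real.cosh α - Real.cos θ) / ((θ + 2 * ((k : ℤ) : ℝ) * Real.pi) ^ 2 + α ^ 2) *
            ((-1 : ℝ) ^ ((k : ℤ) * ((p : ℤ) - 1)) /
              (θ + 2 * ((k : ℤ) : ℝ) * Real.pi) ^ (p - 1))) := by
  obtain ⟨hθ1, hθ2⟩ := hθ
  have hπ := Real.pi_pos
  have hevenN : Even (p - 1) := Nat.Odd.sub_odd hodd odd_one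
  have hevenZ : Even ((p : ℤ) - 1) := by
    rcases hodd with ⟨m, hm⟩
    exact ⟨m, by push_cast [hm]; ring⟩
  have hA : 0 ≤ Real.cosh α - Real.cos θ := by
    have h1 := Real.cos_le_one θ
    have h2 := Real.one_le_cosh α
    linarith
  have hsign : ∀ k : ℤ, ((-1 : ℝ) ^ (k * ((p : ℤ) - 1))) = 1 := fun k =>
    Even.neg_one_zpow (hevenZ.mul_left k)
  -- each term is nonnegative
  have hterm_nonneg : ∀ k : {k : ℤ // k ≠ 0},
      0 ≤ (Real.cosh α - Real.cos θ) / ((θ + 2 * ((k : ℤ) : ℝ) * Real.pi) ^ 2 + α ^ 2) *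
        ((-1 : ℝ) ^ ((k : ℤ) * ((p : ℤ) - 1)) /
          (θ + 2 * ((k : ℤ) : ℝ) * Real.pi) ^ (p - 1)) := by
    intro k
    rw [hsign]
    have h1 : (0:ℝ) ≤ ((θ + 2 * ((k : ℤ) : ℝ) * Real.pi) ^ 2 + α ^ 2) := by positivity
    have h2 : (0:ℝ) ≤ (θ + 2 * ((k : ℤ) : ℝ) * Real.pi) ^ (p - 1) := hevenN.pow_nonneg _
    exact mul_nonneg (div_nonneg hA h1) (div_nonneg zero_le_one h2)
  -- the key lower bound on |θ + 2kπ|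
  have hx : ∀ k : {k : ℤ // k ≠ 0},
      Real.pi * |((k : ℤ) : ℝ)| ≤ |θ + 2 * ((k : ℤ) : ℝ) * Real.pi| := by
    rintro ⟨k, hk⟩
    have h1 : (1:ℝ) ≤ |((k : ℤ) : ℝ)| := by
      have := Int.one_le_abs hk
      calc (1:ℝ) ≤ (|k| : ℝ) := by exact_mod_cast this
        _ = |((k:ℤ):ℝ)| := by push_cast; ring
    have h2 : |θ| ≤ Real.pi := abs_le.mpr ⟨hθ1, hθ2⟩
    have h3 : |2 * ((k:ℤ):ℝ) * Real.pi| ≤ |θ + 2 * ((k:ℤ):ℝ) * Real.pi| + |θ| := by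
      calc |2 * ((k:ℤ):ℝ) * Real.pi| = |(θ + 2 * ((k:ℤ):ℝ) * Real.pi) + (-θ)| := by ring_nf
        _ ≤ |θ + 2 * ((k:ℤ):ℝ) * Real.pi| + |(-θ)| := abs_add_le _ _
        _ = |θ + 2 * ((k:ℤ):ℝ) * Real.pi| + |θ| := by rw [abs_neg]
    have h4 : |2 * ((k:ℤ):ℝ) * Real.pi| = 2 * |((k:ℤ):ℝ)| * Real.pi := by
      rw [abs_mul, abs_mul]
      rw [abs_of_nonneg hπ.le, abs_of_nonneg (by norm_num : (0:ℝ) ≤ 2)]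
    nlinarith [abs_nonneg (θ + 2 * ((k:ℤ):ℝ) * Real.pi)]
  -- summability via comparison with 1/k^2
  have hsum : Summable (fun k : {k : ℤ // k ≠ 0} =>
      ((Real.cosh α - Real.cos θ) / (α ^ 2 * Real.pi ^ 2)) * (1 / ((k:ℤ):ℝ) ^ 2)) := by
    apply Summable.mul_left
    have h := Real.summable_one_div_int_pow.mpr (by norm_num : 1 < 2)
    exact h.subtype {k : ℤ | k ≠ 0}
  have hSummable : Summable (fun k : {k : ℤ // k ≠ 0} =>
      |(Real.cosh α - Real.cos θ) / ((θ + 2 * ((k : ℤ) : ℝ) * Real.pi) ^ 2 + α ^ 2) *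
        ((-1 : ℝ) ^ ((k : ℤ) * ((p : ℤ) - 1)) /
          (θ + 2 * ((k : ℤ) : ℝ) * Real.pi) ^ (p - 1))|) := by
    apply Summable.of_nonneg_of_le (fun k => abs_nonneg _) _ hsum
    intro k
    set x := θ + 2 * ((k : ℤ) : ℝ) * Real.pi with hxdef
    rw [abs_of_nonneg (hterm_nonneg k), hsign]
    have hk1 : (1:ℝ) ≤ |((k:ℤ):ℝ)| := by
      have := Int.one_le_abs k.2
      calc (1:ℝ) ≤ (|(k:ℤ)| : ℝ) := by exact_mod_cast this
        _ = |((k:ℤ):ℝ)| := by push_cast; ring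
    have hxπ : Real.pi ≤ |x| := le_trans (by nlinarith) (hx k)
    have hx1 : (1:ℝ) ≤ |x| := le_trans (by nlinarith [Real.pi_gt_three]) hxπ
    have hxp : |x| ^ 2 ≤ |x| ^ (p - 1) := pow_le_pow_right₀ hx1 (by omega)
    have hxsq : (Real.pi * |((k:ℤ):ℝ)|) ^ 2 ≤ |x| ^ 2 := by
      apply pow_le_pow_left₀ (by positivity) (hx k)
    have hxpe : x ^ (p - 1) = |x| ^ (p - 1) := (hevenN.pow_abs x).symm
    have hD : α ^ 2 * Real.pi ^ 2 * ((k:ℤ):ℝ) ^ 2 ≤ (x ^ 2 + α ^ 2) * x ^ (p - 1) := by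
      rw [hxpe]
      have h1 : Real.pi ^ 2 * ((k:ℤ):ℝ) ^ 2 ≤ |x| ^ (p - 1) := by
        calc Real.pi ^ 2 * ((k:ℤ):ℝ) ^ 2 = (Real.pi * |((k:ℤ):ℝ)|) ^ 2 := by
              rw [mul_pow, sq_abs]
          _ ≤ |x| ^ 2 := hxsq
          _ ≤ |x| ^ (p - 1) := hxp
      nlinarith [sq_nonneg x, sq_nonneg (|x|), hevenN.pow_nonneg (|x|),
        pow_nonneg (abs_nonneg x) (p-1)]
    have hk0 : ((k:ℤ):ℝ) ≠ 0 := Int.cast_ne_zero.mpr k.2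
    have hDpos : (0:ℝ) < α ^ 2 * Real.pi ^ 2 * ((k:ℤ):ℝ) ^ 2 := by positivity
    calc (Real.cosh α - Real.cos θ) / (x ^ 2 + α ^ 2) * (1 / x ^ (p - 1))
        = (Real.cosh α - Real.cos θ) / ((x ^ 2 + α ^ 2) * x ^ (p - 1)) := by
          rw [div_mul_div_comm, mul_one]
      _ ≤ (Real.cosh α - Real.cos θ) / (α ^ 2 * Real.pi ^ 2 * ((k:ℤ):ℝ) ^ 2) :=
          div_le_div_of_nonneg_left hA hDpos hD
      _ = (Real.cosh α - Real.cos θ) / (α ^ 2 * Real.pi ^ 2) * (1 / ((k:ℤ):ℝ) ^ 2) := by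
          rw [div_mul_div_comm, mul_one]
  refine ⟨hSummable, ?_⟩
  have htsum : 0 ≤ ∑' k : {k : ℤ // k ≠ 0},
      (Real.cosh α - Real.cos θ) / ((θ + 2 * ((k : ℤ) : ℝ) * Real.pi) ^ 2 + α ^ 2) *
        ((-1 : ℝ) ^ ((k : ℤ) * ((p : ℤ) - 1)) /
          (θ + 2 * ((k : ℤ) : ℝ) * Real.pi) ^ (p - 1)) := tsum_nonneg hterm_nonneg
  have hc : 0 < Real.cosh α - 1 := by
    have : 1 < Real.cosh α := by
      rw [Real.one_lt_cosh]
      exact hα.ne'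
    linarith
  have h1 : 0 ≤ α ^ 2 / (Real.cosh α - 1) := by positivity
  have h2 : 0 ≤ (2 * Real.sin (θ / 2)) ^ (p - 1) := hevenN.pow_nonneg _
  exact mul_nonneg h2 (mul_nonneg h1 htsum)
end
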